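/- Let p be an odd prime, let r ≥ 2 be an integer, and let n = 2^r·p. Define A = {1 + i·2^r : 0 ≤ i ≤ (p−1)/2} ∪ {1 + j·2^r + n/2 : 1 ≤ j ≤ (p−1)/2} and B = {1 − i·2^r : 0 ≤ i ≤ (p−1)/2} ∪ {1 − j·2^r + n/2 : 1 ≤ j ≤ (p−1)/2} as subsets of ℤ/nℤ. Then there is no integer q with gcd(q, n) = 1 such that B = q·A as subsets of ℤ/nℤ, where q·A = {q·a : a ∈ A}. -/

import Mathlib

/-- The connection set `A` in `ℤ/nℤ`, `n = 2^r·p`. -/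
def connA (n r p : ℕ) : Finset (ZMod n) :=
  ((Finset.range ((p - 1) / 2 + 1)).image fun i => ((1 + i * 2 ^ r : ℕ) : ZMod n)) ∪
  ((Finset.Icc 1 ((p - 1) / 2)).image fun j => ((1 + j * 2 ^ r + n / 2 : ℕ) : ZMod n))

/-- The connection set `B` in `ℤ/nℤ`, `n = 2^r·p`. -/
def connB (n r p : ℕ) : Finset (ZMod n) :=
  ((Finset.range ((p - 1) / 2 + 1)).image fun i => (1 - (i * 2 ^ r : ℕ) : ZMod n)) ∪
  ((Finset.Icc 1 ((p - 1) / 2)).image fun j =>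
    (1 - (j * 2 ^ r : ℕ) + (n / 2 : ℕ) : ZMod n))

/-!
Reduce modulo `2^r` and modulo `p`. Modulo `2^r`, both `A` and `B` lie over the two units `1`
and `u = 1 + 2^(r-1)`, and `u² = 1` because `r ≥ 2`. Modulo `p`, the fibres over `u` are
`S = {1 + j·2^r}` and `T = {1 - j·2^r}` (`1 ≤ j ≤ (p-1)/2`), and the fibres over `1` are
`S ∪ {1}` and `T ∪ {1}`, where `1 ∉ S, T`. Multiplication by `q` carries the fibre of `A` over
`t` onto the fibre of `B` over `q·t`. If `q ≡ u (mod 2^r)` the two fibres are swapped, which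
forces `1 ∈ T`; if `q ≡ 1 (mod 2^r)` comparing fibres gives `q ≡ 1 (mod p)` and then `S = T`,
which fails at `1 + 2^r`.
-/

open Finset

section FiberImage

variable {R S T : Type*} [DecidableEq S] [DecidableEq T]

def fiberImage (φ : R → S) (ψ : R → T) (X : Finset R) (s : S) : Finset T :=
  (X.filter (φ · = s)).image ψ

section Union

variable [DecidableEq R] (φ : R → S) (ψ : R → T) {α β : Type*} {f : α → R} {g : β → R}
  {A : Finset α} {B : Finset β} {s : S}

lemma fiberImage_image_union_image_of_left (hf : ∀ a ∈ A, φ (f a) = s)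
    (hg : ∀ b ∈ B, φ (g b) ≠ s) :
    fiberImage φ ψ (A.image f ∪ B.image g) s = A.image (ψ ∘ f) := by
  rw [fiberImage, filter_union, filter_true_of_mem (forall_mem_image.mpr hf),
    filter_false_of_mem (forall_mem_image.mpr hg), union_empty, image_image]

lemma fiberImage_image_union_image_of_right (hf : ∀ a ∈ A, φ (f a) ≠ s)
    (hg : ∀ b ∈ B, φ (g b) = s) :
    fiberImage φ ψ (A.image f ∪ B.image g) s = B.image (ψ ∘ g) := by
  rw [fiberImage, filter_union, filter_false_of_mem (forall_mem_image.mpr hf),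
    filter_true_of_mem (forall_mem_image.mpr hg), empty_union, image_image]

end Union

lemma fiberImage_image_mul [Monoid R] [Monoid S] [Monoid T] [DecidableEq R]
    {F G : Type*} [FunLike F R S] [MonoidHomClass F R S] [FunLike G R T] [MonoidHomClass G R T]
    (φ : F) (ψ : G) (X : Finset R) (s : S) {q : R} (hq : IsUnit (φ q)) :
    fiberImage φ ψ (X.image (q * ·)) (φ q * s) = (fiberImage φ ψ X s).image (ψ q * ·) := by
  simp only [fiberImage, filter_image, image_image, map_mul, hq.mul_right_inj]
  congr 1
  funext x
  simp

end FiberImage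

section InsertOne

variable {K : Type*} [DecidableEq K] {S T : Finset K} {a : K}

lemma Finset.one_mem_of_image_mul_insert_one_swap [Monoid K]
    (h₁ : T = (insert 1 S).image (a * ·)) (h₂ : insert 1 T = S.image (a * ·)) :
    (1 : K) ∈ T := by
  rw [h₁, image_insert, ← h₂]
  simp

lemma Finset.eq_of_image_mul_insert_one [MonoidWithZero K] [IsLeftCancelMulZero K]
    (ha : a ≠ 0) (hS : 1 ∉ S) (h₁ : insert 1 T = (insert 1 S).image (a * ·))
    (h₂ : T = S.image (a * ·)) :
    S = T := by
  rw [image_insert, mul_one, ← h₂] at h₁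
  have haT : a ∉ T := by
    rw [h₂, mem_image]
    rintro ⟨s, hs, has⟩
    exact hS (mul_left_cancel₀ ha (has.trans (mul_one a).symm) ▸ hs)
  have ha1 : a = 1 := by
    have : a ∈ insert 1 T := h₁ ▸ mem_insert_self a T
    simpa [haT] using this
  simp [h₂, ha1]

end InsertOne

lemma Finset.image_range_succ_eq_insert {α : Type*} [DecidableEq α] (f : ℕ → α) (m : ℕ) :
    (range (m + 1)).image f = insert (f 0) ((Icc 1 m).image f) := by
  rw [← image_insert]
  congr 1
  ext i
  simp only [mem_range, mem_insert, mem_Icc]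
  omega

lemma ZMod.natCast_ne_zero_of_pos_of_lt {p k : ℕ} (hk₀ : 0 < k) (hkp : k < p) :
    (k : ZMod p) ≠ 0 :=
  mt (ZMod.natCast_eq_zero_iff k p).mp (Nat.not_dvd_of_pos_of_lt hk₀ hkp)

def halfProgression (p : ℕ) (d : ZMod p) : Finset (ZMod p) :=
  (Icc 1 ((p - 1) / 2)).image fun j : ℕ => 1 + j * d

section Progression

variable {p : ℕ} [Fact p.Prime]

lemma ZMod.two_pow_ne_zero_of_odd (hodd : Odd p) (r : ℕ) : (2 : ZMod p) ^ r ≠ 0 := by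
  have := (Fact.out : p.Prime).two_le
  obtain ⟨k, hk⟩ := hodd
  exact pow_ne_zero _ (mod_cast ZMod.natCast_ne_zero_of_pos_of_lt (k := 2) two_pos (by omega))

lemma one_notMem_halfProgression {d : ZMod p} (hd : d ≠ 0) : 1 ∉ halfProgression p d := by
  simp only [halfProgression, mem_image, mem_Icc, add_eq_left, not_exists, not_and]
  intro j hj
  exact mul_ne_zero (ZMod.natCast_ne_zero_of_pos_of_lt (by omega) (by omega)) hd

lemma halfProgression_ne_neg (hodd : Odd p) {d : ZMod p} (hd : d ≠ 0) :
    halfProgression p d ≠ halfProgression p (-d) := by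
  have hp := (Fact.out : p.Prime).two_le
  obtain ⟨k, hk⟩ := hodd
  intro h
  have h1 : 1 + ((1 : ℕ) : ZMod p) * d ∈ halfProgression p (-d) :=
    h ▸ mem_image_of_mem _ (mem_Icc.mpr ⟨le_rfl, by omega⟩)
  obtain ⟨j, hj, hj1⟩ := mem_image.mp h1
  rw [mem_Icc] at hj
  have hj₀ : ((j + 1 : ℕ) : ZMod p) ≠ 0 :=
    ZMod.natCast_ne_zero_of_pos_of_lt (by omega) (by omega)
  refine mul_ne_zero hj₀ hd ?_
  push_cast at hj1 ⊢
  linear_combination -hj1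

end Progression

section Reduction

variable {p r : ℕ}

def modTwoPow (r p : ℕ) : ZMod (2 ^ r * p) →+* ZMod (2 ^ r) :=
  ZMod.castHom (dvd_mul_right _ _) _

def modOddPart (r p : ℕ) : ZMod (2 ^ r * p) →+* ZMod p :=
  ZMod.castHom (dvd_mul_left _ _) _

lemma modOddPart_intCast_ne_zero (hp : p.Prime) {q : ℤ} (hq : Int.gcd q (2 ^ r * p) = 1) :
    modOddPart r p q ≠ 0 := by
  rw [map_intCast, Ne, ZMod.intCast_zmod_eq_zero_iff_dvd]
  intro hpq
  have := Int.dvd_gcd hpq (Int.natCast_dvd_natCast.mpr (dvd_mul_left p (2 ^ r)))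
  exact hp.ne_one (Nat.dvd_one.mp (hq ▸ this))

lemma ZMod.two_pow_self : (2 : ZMod (2 ^ r)) ^ r = 0 :=
  mod_cast ZMod.natCast_self (2 ^ r)

lemma ZMod.two_pow_pred_ne_zero (hr : 1 ≤ r) : (2 : ZMod (2 ^ r)) ^ (r - 1) ≠ 0 := by
  have hlt : 2 ^ (r - 1) < 2 ^ r := Nat.pow_lt_pow_right (by norm_num) (by omega)
  exact_mod_cast mt (ZMod.natCast_eq_zero_iff _ _).mp (Nat.not_dvd_of_pos_of_lt (by positivity) hlt)

lemma ZMod.one_add_two_pow_pred_mul_self (hr : 2 ≤ r) :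
    (1 + 2 ^ (r - 1) : ZMod (2 ^ r)) * (1 + 2 ^ (r - 1)) = 1 := by
  obtain ⟨s, rfl⟩ := Nat.exists_eq_add_of_le' hr
  rw [show s + 2 - 1 = s + 1 by omega]
  linear_combination (1 + (2 : ZMod (2 ^ (s + 2))) ^ s) * ZMod.two_pow_self (r := s + 2)

lemma two_pow_mul_div_two (hr : 1 ≤ r) : 2 ^ r * p / 2 = 2 ^ (r - 1) * p := by
  obtain ⟨s, rfl⟩ := Nat.exists_eq_add_of_le' hr
  rw [pow_succ, Nat.add_sub_cancel, mul_right_comm, Nat.mul_div_cancel _ two_pos]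

lemma natCast_half_eq_zero (hr : 1 ≤ r) : ((2 ^ r * p / 2 : ℕ) : ZMod p) = 0 := by
  rw [two_pow_mul_div_two hr, ZMod.natCast_eq_zero_iff]
  exact dvd_mul_left p _

lemma natCast_half_eq_two_pow_pred (hr : 1 ≤ r) (hodd : Odd p) :
    ((2 ^ r * p / 2 : ℕ) : ZMod (2 ^ r)) = 2 ^ (r - 1) := by
  obtain ⟨k, rfl⟩ := hodd
  have h : (2 : ZMod (2 ^ r)) ^ (r - 1) * 2 = 0 := by
    rw [← pow_succ, Nat.sub_add_cancel hr, ZMod.two_pow_self]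
  rw [two_pow_mul_div_two hr]
  push_cast
  linear_combination (k : ZMod (2 ^ r)) * h

end Reduction

section Fibers

variable {p r : ℕ} (hr : 1 ≤ r) (hodd : Odd p)
include hr hodd

attribute [local simp] map_ofNat ZMod.two_pow_self

lemma fiberImage_connA_one :
    fiberImage (modTwoPow r p) (modOddPart r p) (connA (2 ^ r * p) r p) 1 =
      insert 1 (halfProgression p (2 ^ r)) := by
  rw [connA, fiberImage_image_union_image_of_left, image_range_succ_eq_insert] <;>
    simp [halfProgression, Function.comp_def,
      natCast_half_eq_two_pow_pred hr hodd, ZMod.two_pow_pred_ne_zero hr]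

lemma fiberImage_connA_half :
    fiberImage (modTwoPow r p) (modOddPart r p) (connA (2 ^ r * p) r p) (1 + 2 ^ (r - 1)) =
      halfProgression p (2 ^ r) := by
  rw [connA, fiberImage_image_union_image_of_right] <;>
    simp [halfProgression, Function.comp_def, natCast_half_eq_zero hr,
      natCast_half_eq_two_pow_pred hr hodd, eq_comm (a := (1 : ZMod (2 ^ r))),
      ZMod.two_pow_pred_ne_zero hr]

lemma fiberImage_connB_one :
    fiberImage (modTwoPow r p) (modOddPart r p) (connB (2 ^ r * p) r p) 1 =
      insert 1 (halfProgression p (-2 ^ r)) := by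
  rw [connB, fiberImage_image_union_image_of_left, image_range_succ_eq_insert] <;>
    simp [halfProgression, Function.comp_def, sub_eq_add_neg,
      natCast_half_eq_two_pow_pred hr hodd, ZMod.two_pow_pred_ne_zero hr]

lemma fiberImage_connB_half :
    fiberImage (modTwoPow r p) (modOddPart r p) (connB (2 ^ r * p) r p) (1 + 2 ^ (r - 1)) =
      halfProgression p (-2 ^ r) := by
  rw [connB, fiberImage_image_union_image_of_right] <;>
    simp [halfProgression, Function.comp_def, sub_eq_add_neg,
      natCast_half_eq_zero hr, natCast_half_eq_two_pow_pred hr hodd,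
      eq_comm (a := (1 : ZMod (2 ^ r))), ZMod.two_pow_pred_ne_zero hr]

lemma modTwoPow_of_mem_connB {x : ZMod (2 ^ r * p)} (hx : x ∈ connB (2 ^ r * p) r p) :
    modTwoPow r p x = 1 ∨ modTwoPow r p x = 1 + 2 ^ (r - 1) := by
  rw [connB, mem_union, mem_image, mem_image] at hx
  rcases hx with ⟨i, -, rfl⟩ | ⟨j, -, rfl⟩
  · simp
  · simp [natCast_half_eq_two_pow_pred hr hodd]

end Fibers

theorem conn_sets_not_multiplier_equivalent_general (p r : ℕ) (hp : p.Prime)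
    (hodd : Odd p) (hr : 2 ≤ r) (n : ℕ) (hn : n = 2 ^ r * p) :
    ¬ ∃ q : ℤ, Int.gcd q n = 1 ∧
        connB n r p = (connA n r p).image fun a => (q : ZMod n) * a := by
  subst hn
  rintro ⟨q, hq, hB⟩
  have := Fact.mk hp
  have hr1 : 1 ≤ r := by omega
  have hc := ZMod.two_pow_ne_zero_of_odd hodd r
  set u : ZMod (2 ^ r) := 1 + 2 ^ (r - 1)
  have hu : u * u = 1 := ZMod.one_add_two_pow_pred_mul_self hr
  have hqB : (q : ZMod (2 ^ r * p)) ∈ connB (2 ^ r * p) r p :=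
    hB ▸ mem_image.mpr
      ⟨1, mem_union_left _ (mem_image.mpr ⟨0, by simp, by simp⟩), mul_one _⟩
  have hφq := modTwoPow_of_mem_connB hr1 hodd hqB
  have hunit : IsUnit (modTwoPow r p q) := by
    rcases hφq with h | h <;> rw [h]
    exacts [isUnit_one, .of_mul_eq_one u hu]
  have h₁ := fiberImage_image_mul (modTwoPow r p) (modOddPart r p) (connA _ r p) 1 hunit
  have h₂ := fiberImage_image_mul (modTwoPow r p) (modOddPart r p) (connA _ r p) u hunit
  rw [← hB] at h₁ h₂
  rcases hφq with hφq | hφq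
  · rw [hφq, one_mul, fiberImage_connA_one hr1 hodd, fiberImage_connB_one hr1 hodd] at h₁
    rw [hφq, one_mul, fiberImage_connA_half hr1 hodd, fiberImage_connB_half hr1 hodd] at h₂
    exact halfProgression_ne_neg hodd hc <| eq_of_image_mul_insert_one
      (modOddPart_intCast_ne_zero hp hq) (one_notMem_halfProgression hc) h₁ h₂
  · rw [hφq, mul_one, fiberImage_connA_one hr1 hodd, fiberImage_connB_half hr1 hodd] at h₁
    rw [hφq, hu, fiberImage_connA_half hr1 hodd, fiberImage_connB_one hr1 hodd] at h₂
    exact one_notMem_halfProgression (neg_ne_zero.mpr hc)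
      (one_mem_of_image_mul_insert_one_swap h₁ h₂)

/-- For `n = 2^r·p` (`p` an odd prime, `r ≥ 2`), there is no integer `q` coprime
to `n` with `B = q·A` in `ℤ/nℤ`. -/
theorem conn_sets_not_multiplier_equivalent (p r : ℕ) (hp : p.Prime)
    (hodd : Odd p) (hr : 2 ≤ r) (n : ℕ) [NeZero n] (hn : n = 2 ^ r * p) :
    ¬ ∃ q : ℤ, Int.gcd q n = 1 ∧
        connB n r p = (connA n r p).image fun a => (q : ZMod n) * a :=
  conn_sets_not_multiplier_equivalent_general p r hp hodd hr n hn
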